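/- For every natural number t, there is a hitting set for S_1,…,S_m of size at most t if and only if the graph G(U; S_1,…,S_m) has a vertex cover of size at most t + 2(p_1 + ⋯ + p_m). -/
import Mathlib


/-- Vertex set of the graph `G(U; S_1, …, S_m)`: the vertices `w_u` for `u ∈ α`
(`Sum.inl`), the `a`-vertices `a^j_s` of the triangle-path copies (`Sum.inr ∘ Sum.inl`),
and the `b`-vertices `b^j_i` of the triangle-path copies (`Sum.inr ∘ Sum.inr`),
all 0-indexed. -/
abbrev HSV (α : Type*) (m : ℕ) (p : Fin m → ℕ) : Type _ :=
  α ⊕ ((Σ j : Fin m, Fin (p j)) ⊕ (Σ j : Fin m, Fin (2 * p j + 2)))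

/-- The edges of `G(U; S_1, …, S_m)` (as a relation, to be symmetrized): for each
`j ∈ [m]`, the edges of the triangle-path copy `T^j` (i.e. `{b^j_i, b^j_{i+1}}` and
`{a^j_s, b^j_{2s}}`, `{a^j_s, b^j_{2s+1}}`, here 0-indexed), together with the edges
`{a^j_s, w_{u^j_s}}`; the vertices `w_u` form an independent set. -/
def HSRel (α : Type*) (m : ℕ) (p : Fin m → ℕ) (u : ∀ j : Fin m, Fin (p j) → α) :
    HSV α m p → HSV α m p → Prop
  | Sum.inl w, Sum.inr (Sum.inl ⟨j, s⟩) => w = u j s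
  | Sum.inr (Sum.inl ⟨j, s⟩), Sum.inr (Sum.inr ⟨j', i⟩) =>
      j = j' ∧ ((i : ℕ) = 2 * (s : ℕ) + 1 ∨ (i : ℕ) = 2 * (s : ℕ) + 2)
  | Sum.inr (Sum.inr ⟨j, i⟩), Sum.inr (Sum.inr ⟨j', i'⟩) =>
      j = j' ∧ (i' : ℕ) = (i : ℕ) + 1
  | _, _ => False

/-- The graph `G(U; S_1, …, S_m)`, where `S_j` is (the range of) the injective
enumeration `u j : Fin (p j) → α`. -/
def hsGraph (α : Type*) (m : ℕ) (p : Fin m → ℕ) (u : ∀ j : Fin m, Fin (p j) → α) :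
    SimpleGraph (HSV α m p) :=
  SimpleGraph.fromRel (HSRel α m p u)

/-- A vertex cover: a set of vertices containing at least one endpoint of every edge. -/
def IsVertexCover {β : Type*} (G : SimpleGraph β) (C : Set β) : Prop :=
  ∀ ⦃x y : β⦄, G.Adj x y → x ∈ C ∨ y ∈ C

lemma ncard_sum_decomp {β γ : Type*} [Fintype β] [Fintype γ] (S : Set (β ⊕ γ)) :
    S.ncard = (Sum.inl ⁻¹' S).ncard + (Sum.inr ⁻¹' S).ncard := by
  classical
  have h : S = Sum.inl '' (Sum.inl ⁻¹' S) ∪ Sum.inr '' (Sum.inr ⁻¹' S) := by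
    ext x; cases x <;> simp
  have hd : Disjoint (Sum.inl '' (Sum.inl ⁻¹' S)) (Sum.inr '' (Sum.inr ⁻¹' S) : Set (β ⊕ γ)) := by
    rw [Set.disjoint_left]
    rintro _ ⟨a, _, rfl⟩ ⟨b, _, hb⟩
    exact Sum.inl_ne_inr hb.symm
  nth_rewrite 1 [h]
  rw [Set.ncard_union_eq hd (Set.toFinite _) (Set.toFinite _),
    Set.ncard_image_of_injective _ Sum.inl_injective,
    Set.ncard_image_of_injective _ Sum.inr_injective]

lemma ncard_sigma_decomp {ι : Type*} [Fintype ι] {κ : ι → Type*} [∀ i, Fintype (κ i)]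
    (S : Set (Σ i, κ i)) :
    S.ncard = ∑ i, {k | (⟨i, k⟩ : Σ i, κ i) ∈ S}.ncard := by
  classical
  rw [Set.ncard_eq_toFinset_card' S]
  have h : S.toFinset = Finset.univ.sigma (fun i => {k | (⟨i, k⟩ : Σ i, κ i) ∈ S}.toFinset) := by
    ext ⟨i, k⟩; simp
  rw [h, Finset.card_sigma]
  exact Finset.sum_congr rfl fun i _ => (Set.ncard_eq_toFinset_card' _).symm

/-- A vertex cover of the path on `2p+2` vertices has at least `p+1` vertices. -/
lemma path_cover_bound (p : ℕ) (D : Set (Fin (2 * p + 2)))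
    (hD : ∀ i : ℕ, (h : i + 1 < 2 * p + 2) →
      (⟨i, by omega⟩ : Fin (2 * p + 2)) ∈ D ∨ (⟨i + 1, h⟩ : Fin (2 * p + 2)) ∈ D) :
    p + 1 ≤ D.ncard := by
  classical
  set f : Fin (p + 1) → Fin (2 * p + 2) := fun k =>
    if (⟨2 * k, by omega⟩ : Fin (2 * p + 2)) ∈ D then ⟨2 * k, by omega⟩
    else ⟨2 * k + 1, by omega⟩ with hf
  have hmem : ∀ k, f k ∈ D := by
    intro k
    by_cases h : (⟨2 * k, by omega⟩ : Fin (2 * p + 2)) ∈ D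
    · simpa [hf, h] using h
    · have := hD (2 * k) (by omega)
      simp only [hf, h, if_false]
      tauto
  have hval : ∀ k : Fin (p + 1), (f k : ℕ) = 2 * k ∨ (f k : ℕ) = 2 * k + 1 := by
    intro k
    by_cases h : (⟨2 * k, by omega⟩ : Fin (2 * p + 2)) ∈ D <;> simp [hf, h]
  have hinj : Function.Injective f := by
    intro k k' h
    have h1 := hval k
    have h2 := hval k'
    have : (f k : ℕ) = (f k' : ℕ) := by rw [h]
    ext
    omega
  calc p + 1 = (Set.range f).ncard := by
        rw [← Set.image_univ, Set.ncard_image_of_injective _ hinj, Set.ncard_univ]; simp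
    _ ≤ D.ncard := Set.ncard_le_ncard (by rintro _ ⟨k, rfl⟩; exact hmem k) (Set.toFinite _)

/-- Triangle counting: covers of the triangle path use at least `2p` vertices. -/
lemma triangle_bound (p : ℕ) (SA : Set (Fin p)) (SB : Set (Fin (2 * p + 2)))
    (h1 : ∀ s : Fin p, s ∈ SA ∨ (⟨2 * s + 1, by omega⟩ : Fin (2 * p + 2)) ∈ SB)
    (h2 : ∀ s : Fin p, s ∈ SA ∨ (⟨2 * s + 2, by omega⟩ : Fin (2 * p + 2)) ∈ SB)
    (h3 : ∀ s : Fin p, (⟨2 * s + 1, by omega⟩ : Fin (2 * p + 2)) ∈ SB ∨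
      (⟨2 * s + 2, by omega⟩ : Fin (2 * p + 2)) ∈ SB) :
    2 * p ≤ SA.ncard + SB.ncard := by
  classical
  set g : Fin p → Finset (Fin (2 * p + 2)) := fun s =>
    SB.toFinset.filter (fun i => (i : ℕ) = 2 * s + 1 ∨ (i : ℕ) = 2 * s + 2) with hg
  have hdisj : ∀ s ∈ Finset.univ, ∀ s' ∈ Finset.univ, s ≠ s' →
      Disjoint (g s) (g s') := by
    intro s _ s' _ hss
    rw [Finset.disjoint_left]
    intro i hi hi'
    simp only [hg, Finset.mem_filter] at hi hi'
    have : (s : ℕ) ≠ (s' : ℕ) := fun h => hss (Fin.ext h)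
    omega
  have hsum : ∑ s, (g s).card ≤ SB.ncard := by
    rw [Set.ncard_eq_toFinset_card' SB, ← Finset.card_biUnion hdisj]
    apply Finset.card_le_card
    intro i hi
    simp only [Finset.mem_biUnion] at hi
    obtain ⟨s, _, hs⟩ := hi
    simp only [hg, Finset.mem_filter] at hs
    exact hs.1
  have hA : SA.ncard = ∑ s, (if s ∈ SA then 1 else 0) := by
    rw [Set.ncard_eq_toFinset_card' SA,
      show SA.toFinset = Finset.univ.filter (· ∈ SA) by ext; simp,
      Finset.card_filter]
  have hper : ∀ s : Fin p, 2 ≤ (if s ∈ SA then 1 else 0) + (g s).card := by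
    intro s
    by_cases hs : s ∈ SA
    · have : (g s).Nonempty := by
        rcases h3 s with h | h
        · exact ⟨⟨2 * s + 1, by omega⟩, by simp [hg, Set.mem_toFinset, h]⟩
        · exact ⟨⟨2 * s + 2, by omega⟩, by simp [hg, Set.mem_toFinset, h]⟩
      have := Finset.card_pos.mpr this
      simp [hs]; omega
    · have hb1 := (h1 s).resolve_left hs
      have hb2 := (h2 s).resolve_left hs
      have hsub : ({⟨2 * s + 1, by omega⟩, ⟨2 * s + 2, by omega⟩} : Finset (Fin (2 * p + 2))) ⊆ g s := by
        intro i hi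
        simp only [Finset.mem_insert, Finset.mem_singleton] at hi
        rcases hi with rfl | rfl <;> simp [hg, Set.mem_toFinset, hb1, hb2]
      have hcard2 : ({⟨2 * s + 1, by omega⟩, ⟨2 * s + 2, by omega⟩} : Finset (Fin (2 * p + 2))).card = 2 := by
        exact Finset.card_pair (Fin.ne_of_val_ne (by simp))
      have := Finset.card_le_card hsub
      simp [hs]
      omega
  calc 2 * p = ∑ s : Fin p, 2 := by simp [mul_comm]
    _ ≤ ∑ s : Fin p, ((if s ∈ SA then 1 else 0) + (g s).card) := Finset.sum_le_sum (fun s _ => hper s)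
    _ = SA.ncard + ∑ s, (g s).card := by rw [Finset.sum_add_distrib, hA]
    _ ≤ SA.ncard + SB.ncard := by omega

/-- There is a hitting set for `S_1, …, S_m` of size at most `t` iff
`G(U; S_1, …, S_m)` has a vertex cover of size at most `t + 2(p_1 + ⋯ + p_m)`. -/
theorem stmt_12 {α : Type*} [Fintype α] (m : ℕ) (p : Fin m → ℕ)
    (hp : ∀ j, 1 ≤ p j) (u : ∀ j : Fin m, Fin (p j) → α)
    (hu : ∀ j, Function.Injective (u j)) (t : ℕ) :
    (∃ H : Set α, H.ncard ≤ t ∧ ∀ j : Fin m, ∃ x ∈ H, ∃ s : Fin (p j), u j s = x) ↔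
    (∃ C : Set (HSV α m p), IsVertexCover (hsGraph α m p u) C ∧
      C.ncard ≤ t + 2 * ∑ j : Fin m, p j) := by
  classical
  constructor
  · -- forward: hitting set → vertex cover
    rintro ⟨H, hHcard, hHhit⟩
    have hchoice : ∀ j, ∃ s : Fin (p j), u j s ∈ H := by
      intro j
      obtain ⟨x, hx, s, hs⟩ := hHhit j
      exact ⟨s, hs ▸ hx⟩
    choose σ hσ using hchoice
    set C : Set (HSV α m p) := fun v =>
      match v with
      | Sum.inl x => x ∈ H
      | Sum.inr (Sum.inl q) => q.2 ≠ σ q.1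
      | Sum.inr (Sum.inr q) =>
          (((q.2 : ℕ) % 2 = 1 ∧ (q.2 : ℕ) ≤ 2 * (σ q.1 : ℕ) + 1) ∨
            ((q.2 : ℕ) % 2 = 0 ∧ 2 * (σ q.1 : ℕ) + 2 ≤ (q.2 : ℕ) ∧ (q.2 : ℕ) ≤ 2 * p q.1))
      with hC
    refine ⟨C, ?_, ?_⟩
    · -- vertex cover
      have claim : ∀ x y, HSRel α m p u x y → x ∈ C ∨ y ∈ C := by
        rintro (x | ⟨j, s⟩ | ⟨j, i⟩) (y | ⟨j', s'⟩ | ⟨j', i'⟩) h <;> try exact h.elim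
        · -- w -- a edge
          obtain rfl : x = u j' s' := h
          by_cases hs : s' = σ j'
          · exact Or.inl (by rw [hs]; exact hσ j')
          · exact Or.inr hs
        · -- a -- b edge
          obtain ⟨rfl, hi⟩ := h
          by_cases hs : s = σ j
          · rw [hs] at hi
            have hσlt : (σ j : ℕ) < p j := (σ j).isLt
            right
            rcases hi with hi | hi
            · exact Or.inl (show ((i' : ℕ) % 2 = 1 ∧ (i' : ℕ) ≤ 2 * (σ j : ℕ) + 1) by omega)
            · exact Or.inr (show ((i' : ℕ) % 2 = 0 ∧ 2 * (σ j : ℕ) + 2 ≤ (i' : ℕ) ∧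
                (i' : ℕ) ≤ 2 * p j) by omega)
          · exact Or.inl hs
        · -- b -- b edge
          obtain ⟨rfl, hi⟩ := h
          have h1 : (i : ℕ) < 2 * p j + 2 := i.isLt
          have h2 : (i' : ℕ) < 2 * p j + 2 := i'.isLt
          have hgoal : (((i : ℕ) % 2 = 1 ∧ (i : ℕ) ≤ 2 * (σ j : ℕ) + 1) ∨
              ((i : ℕ) % 2 = 0 ∧ 2 * (σ j : ℕ) + 2 ≤ (i : ℕ) ∧ (i : ℕ) ≤ 2 * p j)) ∨
              (((i' : ℕ) % 2 = 1 ∧ (i' : ℕ) ≤ 2 * (σ j : ℕ) + 1) ∨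
              ((i' : ℕ) % 2 = 0 ∧ 2 * (σ j : ℕ) + 2 ≤ (i' : ℕ) ∧ (i' : ℕ) ≤ 2 * p j)) := by
            omega
          exact hgoal
      intro x y hxy
      rw [hsGraph, SimpleGraph.fromRel_adj] at hxy
      rcases hxy.2 with h | h
      · exact claim x y h
      · exact (claim y x h).symm
    · -- cardinality
      have hdec : C.ncard = (Sum.inl ⁻¹' C).ncard +
          ((∑ j, {s | (Sum.inr (Sum.inl ⟨j, s⟩) : HSV α m p) ∈ C}.ncard) +
           (∑ j, {i | (Sum.inr (Sum.inr ⟨j, i⟩) : HSV α m p) ∈ C}.ncard)) := by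
        rw [ncard_sum_decomp C, ncard_sum_decomp (Sum.inr ⁻¹' C),
          ncard_sigma_decomp, ncard_sigma_decomp]
        rfl
      have hW : (Sum.inl ⁻¹' C) = H := rfl
      have hAle : ∀ j, {s | (Sum.inr (Sum.inl ⟨j, s⟩) : HSV α m p) ∈ C}.ncard ≤ p j - 1 := by
        intro j
        have hss : {s | (Sum.inr (Sum.inl ⟨j, s⟩) : HSV α m p) ∈ C} ⊂ Set.univ := by
          rw [Set.ssubset_univ_iff]
          intro habs
          have : σ j ∈ {s | (Sum.inr (Sum.inl ⟨j, s⟩) : HSV α m p) ∈ C} := habs ▸ Set.mem_univ _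
          exact this rfl
        have := Set.ncard_lt_ncard hss (Set.toFinite _)
        rw [Set.ncard_univ, Nat.card_eq_fintype_card, Fintype.card_fin] at this
        omega
      have hBle : ∀ j, {i | (Sum.inr (Sum.inr ⟨j, i⟩) : HSV α m p) ∈ C}.ncard ≤ p j + 1 := by
        intro j
        have := Set.ncard_le_ncard_of_injOn
          (s := {i | (Sum.inr (Sum.inr ⟨j, i⟩) : HSV α m p) ∈ C}) (t := Set.univ)
          (fun i : Fin (2 * p j + 2) => (⟨(i : ℕ) / 2, by omega⟩ : Fin (p j + 1)))
          (fun i _ => Set.mem_univ _) ?_ (Set.toFinite _)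
        · rw [Set.ncard_univ, Nat.card_eq_fintype_card, Fintype.card_fin] at this
          exact this
        · intro i hi i' hi' hii
          have hgi : ((i : ℕ) % 2 = 1 ∧ (i : ℕ) ≤ 2 * (σ j : ℕ) + 1) ∨
              ((i : ℕ) % 2 = 0 ∧ 2 * (σ j : ℕ) + 2 ≤ (i : ℕ) ∧ (i : ℕ) ≤ 2 * p j) := hi
          have hgi' : ((i' : ℕ) % 2 = 1 ∧ (i' : ℕ) ≤ 2 * (σ j : ℕ) + 1) ∨
              ((i' : ℕ) % 2 = 0 ∧ 2 * (σ j : ℕ) + 2 ≤ (i' : ℕ) ∧ (i' : ℕ) ≤ 2 * p j) := hi'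
          have hval : (i : ℕ) / 2 = (i' : ℕ) / 2 := congrArg Fin.val hii
          ext
          omega
      rw [hdec, hW]
      have hsum : (∑ j, {s | (Sum.inr (Sum.inl ⟨j, s⟩) : HSV α m p) ∈ C}.ncard) +
          (∑ j, {i | (Sum.inr (Sum.inr ⟨j, i⟩) : HSV α m p) ∈ C}.ncard) ≤
          2 * ∑ j : Fin m, p j := by
        rw [Finset.mul_sum, ← Finset.sum_add_distrib]
        apply Finset.sum_le_sum
        intro j _
        have := hAle j
        have := hBle j
        have := hp j
        omega
      omega
  · -- backward: vertex cover → hitting set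
    rintro ⟨C, hcov, hcard⟩
    have hwa : ∀ j (s : Fin (p j)),
        (Sum.inl (u j s) : HSV α m p) ∈ C ∨ (Sum.inr (Sum.inl ⟨j, s⟩) : HSV α m p) ∈ C := by
      intro j s
      apply hcov
      rw [hsGraph, SimpleGraph.fromRel_adj]
      exact ⟨by simp, Or.inl rfl⟩
    have hab : ∀ j (s : Fin (p j)) (i : Fin (2 * p j + 2)),
        ((i : ℕ) = 2 * s + 1 ∨ (i : ℕ) = 2 * s + 2) →
        (Sum.inr (Sum.inl ⟨j, s⟩) : HSV α m p) ∈ C ∨ (Sum.inr (Sum.inr ⟨j, i⟩) : HSV α m p) ∈ C := by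
      intro j s i hi
      apply hcov
      rw [hsGraph, SimpleGraph.fromRel_adj]
      exact ⟨by simp, Or.inl ⟨rfl, hi⟩⟩
    have hbb : ∀ j (i : ℕ) (h : i + 1 < 2 * p j + 2),
        (Sum.inr (Sum.inr ⟨j, ⟨i, by omega⟩⟩) : HSV α m p) ∈ C ∨
        (Sum.inr (Sum.inr ⟨j, ⟨i + 1, h⟩⟩) : HSV α m p) ∈ C := by
      intro j i h
      apply hcov
      rw [hsGraph, SimpleGraph.fromRel_adj]
      refine ⟨?_, Or.inl ⟨rfl, rfl⟩⟩
      simp [Fin.ext_iff]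
    set W : Set α := Sum.inl ⁻¹' C with hWdef
    set A : ∀ j : Fin m, Set (Fin (p j)) :=
      fun j => {s | (Sum.inr (Sum.inl ⟨j, s⟩) : HSV α m p) ∈ C} with hAdef
    set B : ∀ j : Fin m, Set (Fin (2 * p j + 2)) :=
      fun j => {i | (Sum.inr (Sum.inr ⟨j, i⟩) : HSV α m p) ∈ C} with hBdef
    have hdec : C.ncard = W.ncard + ((∑ j, (A j).ncard) + (∑ j, (B j).ncard)) := by
      rw [ncard_sum_decomp C, ncard_sum_decomp (Sum.inr ⁻¹' C),
        ncard_sigma_decomp, ncard_sigma_decomp]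
      rfl
    set Jf : Finset (Fin m) := Finset.univ.filter (fun j => ∀ s, u j s ∉ W) with hJf
    have hgadget : ∀ j, 2 * p j + (if j ∈ Jf then 1 else 0) ≤ (A j).ncard + (B j).ncard := by
      intro j
      by_cases hj : j ∈ Jf
      · -- unhit: all a's in C
        have hj' : ∀ s, u j s ∉ W := by
          have := hj
          simp only [hJf, Finset.mem_filter] at this
          exact this.2
        have hAfull : ∀ s, s ∈ A j := by
          intro s
          exact (hwa j s).resolve_left (hj' s)
        have hAcard : (A j).ncard = p j := by
          rw [Set.eq_univ_of_forall hAfull, Set.ncard_univ, Nat.card_eq_fintype_card,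
            Fintype.card_fin]
        have hBcard : p j + 1 ≤ (B j).ncard :=
          path_cover_bound (p j) (B j) (fun i h => hbb j i h)
        rw [if_pos hj]
        omega
      · have := triangle_bound (p j) (A j) (B j)
          (fun s => hab j s ⟨2 * s + 1, by omega⟩ (Or.inl rfl))
          (fun s => hab j s ⟨2 * s + 2, by omega⟩ (Or.inr rfl))
          (fun s => hbb j (2 * s + 1) (by omega))
        rw [if_neg hj]
        omega
    have hkey : W.ncard + Jf.card ≤ t := by
      have hsum1 : ∑ j, (2 * p j + (if j ∈ Jf then 1 else 0)) ≤
          (∑ j, (A j).ncard) + (∑ j, (B j).ncard) := by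
        rw [← Finset.sum_add_distrib]
        exact Finset.sum_le_sum (fun j _ => hgadget j)
      have hsum2 : ∑ j, (2 * p j + (if j ∈ Jf then 1 else 0)) =
          2 * (∑ j : Fin m, p j) + Jf.card := by
        rw [Finset.sum_add_distrib, ← Finset.mul_sum]
        congr 1
        rw [Finset.sum_ite_mem, Finset.univ_inter, Finset.card_eq_sum_ones]
      omega
    refine ⟨↑(W.toFinset ∪ Jf.image (fun j => u j ⟨0, hp j⟩)), ?_, ?_⟩
    · rw [Set.ncard_coe_finset]
      calc (W.toFinset ∪ Jf.image (fun j => u j ⟨0, hp j⟩)).card ≤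
            W.toFinset.card + (Jf.image (fun j => u j ⟨0, hp j⟩)).card := Finset.card_union_le _ _
        _ ≤ W.toFinset.card + Jf.card := by
            have := Finset.card_image_le (s := Jf) (f := fun j => u j ⟨0, hp j⟩)
            omega
        _ ≤ t := by rw [← Set.ncard_eq_toFinset_card' W]; omega
    · intro j
      by_cases hj : ∀ s, u j s ∉ W
      · refine ⟨u j ⟨0, hp j⟩, ?_, ⟨0, hp j⟩, rfl⟩
        rw [Finset.mem_coe, Finset.mem_union]
        right
        exact Finset.mem_image.mpr ⟨j, by simp [hJf, hj], rfl⟩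
      · push_neg at hj
        obtain ⟨s, hs⟩ := hj
        refine ⟨u j s, ?_, s, rfl⟩
        rw [Finset.mem_coe, Finset.mem_union]
        left
        exact Set.mem_toFinset.mpr hs
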